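/- Suppose f satisfies conditions (i), (ii) and (iii). Let F : C(Ω̄) → L^p(Ω) be the superposition operator (F(u))(x) = f(x, u(x)) and, for u ∈ C(Ω̄), let L(u) : C(Ω̄) → L^p(Ω) be the bounded linear operator (L(u)v)(x) := ∂_u f(x, u(x)) v(x). Then F is Fréchet differentiable at every u ∈ C(Ω̄) with Fréchet derivative F'(u) = L(u); that is, ‖F(u+v) − F(u) − L(u)v‖_{L^p(Ω)} / ‖v‖_∞ → 0 as ‖v‖_∞ → 0. -/

import Mathlib

/-!
Fix `u` and the compact set `K = [-‖u‖ - 1, ‖u‖ + 1]`. For `‖v‖ ≤ min δ 1`, the mean value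
theorem applied to `t ↦ f x t - t · ∂ᵤf(x, u x)` on the segment from `u x` to `u x + v x` ⊆ `K`,
together with (iii), bounds the Taylor remainder by `ε g_K(x) |v x| ≤ ε ‖v‖ g_K(x)` for a.e. `x`;
taking `L^p` norms gives `‖F(u + v) - F u - L(u) v‖_p ≤ ε ‖g_K‖_p ‖v‖`.
-/

open MeasureTheory ENNReal Classical

/-- The extension by zero of a continuous function on `closure Ω` to the whole space. -/
noncomputable def extendC {N : ℕ} (Ω : Set (Fin N → ℝ)) (u : C(closure Ω, ℝ)) :
    (Fin N → ℝ) → ℝ :=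
  fun x => if hx : x ∈ closure Ω then u ⟨x, hx⟩ else 0

open Set Topology Asymptotics

section Taylor

variable {φ φ' : ℝ → ℝ} {a b : ℝ}

theorem abs_sub_sub_mul_le_of_abs_deriv_sub_le {M : ℝ}
    (hφ : ∀ t ∈ uIcc a (a + b), HasDerivAt φ (φ' t) t)
    (hM : ∀ t ∈ uIcc a (a + b), |φ' t - φ' a| ≤ M) :
    |φ (a + b) - φ a - φ' a * b| ≤ M * |b| := by
  have hderiv : ∀ t ∈ uIcc a (a + b), HasDerivWithinAt (fun t => φ t - t * φ' a)
      (φ' t - φ' a) (uIcc a (a + b)) t := fun t ht =>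
    ((hφ t ht).sub (hasDerivAt_mul_const (φ' a))).hasDerivWithinAt
  have := (convex_uIcc a (a + b)).norm_image_sub_le_of_norm_hasDerivWithin_le hderiv hM
    left_mem_uIcc right_mem_uIcc
  simp only [Real.norm_eq_abs, add_sub_cancel_left] at this
  convert this using 2
  ring

theorem abs_sub_sub_mul_le_of_uniform_bound {K : Set ℝ} {δ M : ℝ}
    (hφ : ∀ t, HasDerivAt φ (φ' t) t) (hK : uIcc a (a + b) ⊆ K) (hb : |b| ≤ δ)
    (hunif : ∀ y ∈ K, ∀ z ∈ K, |y - z| ≤ δ → |φ y - φ z| + |φ' y - φ' z| ≤ M) :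
    |φ (a + b) - φ a - φ' a * b| ≤ M * |b| := by
  refine abs_sub_sub_mul_le_of_abs_deriv_sub_le (fun t _ => hφ t) fun t ht => ?_
  have hta : |t - a| ≤ δ := by
    simpa using (abs_sub_left_of_mem_uIcc ht).trans (by simpa using hb)
  have := hunif t (hK ht) a (hK left_mem_uIcc) hta
  linarith [abs_nonneg (φ t - φ a)]

end Taylor

theorem MeasureTheory.Lp.hasFDerivAt_of_ae_norm_sub_sub_le
    {α E V : Type*} [MeasurableSpace α] {μ : Measure α} {p : ℝ≥0∞} [Fact (1 ≤ p)]
    [NormedAddCommGroup E] [NormedSpace ℝ E] [NormedAddCommGroup V] [NormedSpace ℝ V]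
    {F : E → Lp V p μ} {L : E →L[ℝ] Lp V p μ} {u : E} {g : α → ℝ} (hg : MemLp g p μ)
    (h : ∀ ε > 0, ∀ᶠ v in 𝓝 0, ∀ᵐ x ∂μ, ‖(F (u + v) - F u - L v) x‖ ≤ ε * ‖v‖ * ‖g x‖) :
    HasFDerivAt F L u := by
  rw [hasFDerivAt_iff_isLittleO_nhds_zero, isLittleO_iff]
  intro c hc
  set C := ‖hg.toLp g‖
  have hC : 0 < C + 1 := by positivity
  filter_upwards [h (c / (C + 1)) (div_pos hc hC)] with v hv
  have hv' : ∀ᵐ x ∂μ, ‖(F (u + v) - F u - L v) x‖ ≤ c / (C + 1) * ‖v‖ * ‖hg.toLp g x‖ := by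
    filter_upwards [hv, hg.coeFn_toLp] with x hx hgx
    rwa [hgx]
  calc ‖F (u + v) - F u - L v‖ ≤ c / (C + 1) * ‖v‖ * C := Lp.norm_le_mul_norm_of_ae_le_mul hv'
    _ = c * ‖v‖ * (C / (C + 1)) := by ring
    _ ≤ c * ‖v‖ * 1 := by
      gcongr
      rw [div_le_one hC]
      linarith
    _ = c * ‖v‖ := mul_one _

theorem abs_extendC_le {N : ℕ} (Ω : Set (Fin N → ℝ)) [CompactSpace (closure Ω)]
    (u : C(closure Ω, ℝ)) (x : Fin N → ℝ) : |extendC Ω u x| ≤ ‖u‖ := by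
  unfold extendC
  split_ifs with hx
  · exact u.norm_coe_le_norm ⟨x, hx⟩
  · simp

theorem extendC_add {N : ℕ} (Ω : Set (Fin N → ℝ)) (u v : C(closure Ω, ℝ)) :
    extendC Ω (u + v) = extendC Ω u + extendC Ω v := by
  ext x
  by_cases hx : x ∈ closure Ω <;> simp [extendC, hx]

theorem superposition_hasFDerivAt_general
    {N : ℕ} (Ω : Set (Fin N → ℝ))
    [CompactSpace (closure Ω)]
    (f f' : (Fin N → ℝ) → ℝ → ℝ) (p : ℝ≥0∞) [Fact (1 ≤ p)]
    -- (i): a.e. differentiability in `u`, measurability in `x`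
    (hdiff : ∀ᵐ x ∂(volume.restrict Ω), ∀ y : ℝ, HasDerivAt (f x) (f' x y) y)
    -- (ii) and (iii): local `L^p` domination and uniform continuity relative to `g_K`
    (hbound : ∀ K : Set ℝ, IsCompact K → ∃ g : (Fin N → ℝ) → ℝ,
      MemLp g p (volume.restrict Ω) ∧
      (∀ᵐ x ∂(volume.restrict Ω), ∀ y ∈ K, |f x y| + |f' x y| ≤ g x) ∧
      (∀ ε > (0:ℝ), ∃ δ > (0:ℝ), ∀ᵐ x ∂(volume.restrict Ω), ∀ y ∈ K, ∀ z ∈ K,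
        |y - z| ≤ δ → |f x y - f x z| + |f' x y - f' x z| ≤ ε * g x))
    -- the superposition operator `F`
    (F : C(closure Ω, ℝ) → Lp ℝ p (volume.restrict Ω))
    (hF : ∀ u : C(closure Ω, ℝ),
      ⇑(F u) =ᵐ[volume.restrict Ω] fun x => f x (extendC Ω u x))
    -- the candidate derivative `L`
    (L : C(closure Ω, ℝ) → (C(closure Ω, ℝ) →L[ℝ] Lp ℝ p (volume.restrict Ω)))
    (hL : ∀ u v : C(closure Ω, ℝ),
      ⇑(L u v) =ᵐ[volume.restrict Ω]
        fun x => f' x (extendC Ω u x) * extendC Ω v x) :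
    ∀ u : C(closure Ω, ℝ), HasFDerivAt F (L u) u := by
  intro u
  set r := ‖u‖ + 1
  obtain ⟨g, hg, -, hunif⟩ := hbound (Icc (-r) r) isCompact_Icc
  refine Lp.hasFDerivAt_of_ae_norm_sub_sub_le hg fun ε hε => ?_
  obtain ⟨δ, hδ, hunifδ⟩ := hunif ε hε
  filter_upwards [Metric.closedBall_mem_nhds 0 (lt_min hδ one_pos)] with v hv
  rw [mem_closedBall_zero_iff, le_min_iff] at hv
  filter_upwards [Lp.coeFn_sub (F (u + v)) (F u), Lp.coeFn_sub (F (u + v) - F u) (L u v),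
    hF (u + v), hF u, hL u v, hdiff, hunifδ] with x hsub hsub' hFuv hFu hLuv hdiffx hunifx
  set a := extendC Ω u x
  set b := extendC Ω v x
  have ha := abs_le.mp (abs_extendC_le Ω u x)
  have hb : |b| ≤ ‖v‖ := abs_extendC_le Ω v x
  have hb' := abs_le.mp (hb.trans hv.2)
  have hK : uIcc a (a + b) ⊆ Icc (-r) r :=
    uIcc_subset_Icc ⟨by linarith, by linarith⟩ ⟨by linarith, by linarith⟩
  rw [hsub', Pi.sub_apply, hsub, Pi.sub_apply, hFuv, hFu, hLuv, extendC_add, Pi.add_apply,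
    Real.norm_eq_abs, Real.norm_eq_abs]
  calc |f x (a + b) - f x a - f' x a * b|
      ≤ ε * g x * |b| := abs_sub_sub_mul_le_of_uniform_bound hdiffx hK (hb.trans hv.1) hunifx
    _ ≤ ε * |g x| * ‖v‖ := by gcongr; exact le_abs_self _
    _ = ε * ‖v‖ * |g x| := by ring

/-- Under conditions (i), (ii) and (iii), the superposition operator
`F : C(Ω̄) → L^p(Ω)`, `(F(u))(x) = f(x, u(x))`, is Fréchet differentiable at every
`u ∈ C(Ω̄)` with derivative `F'(u) = L(u)`, where `(L(u)v)(x) = ∂_u f(x, u(x)) v(x)`. -/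
theorem superposition_hasFDerivAt
    {N : ℕ} (Ω : Set (Fin N → ℝ)) (hΩo : IsOpen Ω) (hΩb : Bornology.IsBounded Ω)
    [CompactSpace (closure Ω)]
    (f f' : (Fin N → ℝ) → ℝ → ℝ) (p : ℝ≥0∞) (hp : 2 ≤ p) [Fact (1 ≤ p)]
    -- (i): a.e. differentiability in `u`, measurability in `x`
    (hdiff : ∀ᵐ x ∂(volume.restrict Ω), ∀ y : ℝ, HasDerivAt (f x) (f' x y) y)
    (hmeas : ∀ y : ℝ, AEMeasurable (fun x => f x y) (volume.restrict Ω))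
    -- (ii) and (iii): local `L^p` domination and uniform continuity relative to `g_K`
    (hbound : ∀ K : Set ℝ, IsCompact K → ∃ g : (Fin N → ℝ) → ℝ,
      MemLp g p (volume.restrict Ω) ∧
      (∀ᵐ x ∂(volume.restrict Ω), ∀ y ∈ K, |f x y| + |f' x y| ≤ g x) ∧
      (∀ ε > (0:ℝ), ∃ δ > (0:ℝ), ∀ᵐ x ∂(volume.restrict Ω), ∀ y ∈ K, ∀ z ∈ K,
        |y - z| ≤ δ → |f x y - f x z| + |f' x y - f' x z| ≤ ε * g x))
    -- the superposition operator `F`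
    (F : C(closure Ω, ℝ) → Lp ℝ p (volume.restrict Ω))
    (hF : ∀ u : C(closure Ω, ℝ),
      ⇑(F u) =ᵐ[volume.restrict Ω] fun x => f x (extendC Ω u x))
    -- the candidate derivative `L`
    (L : C(closure Ω, ℝ) → (C(closure Ω, ℝ) →L[ℝ] Lp ℝ p (volume.restrict Ω)))
    (hL : ∀ u v : C(closure Ω, ℝ),
      ⇑(L u v) =ᵐ[volume.restrict Ω]
        fun x => f' x (extendC Ω u x) * extendC Ω v x) :
    ∀ u : C(closure Ω, ℝ), HasFDerivAt F (L u) u :=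
  superposition_hasFDerivAt_general Ω f f' p hdiff hbound F hF L hL
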